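/- Let F = {x ∈ X | ∀ i = 1,…,m, f_i(x) ≥ 0} be nonempty and suppose x_0 ∈ F. Define the algorithm's chosen action at step k as x^k = x_0 if the partially revealed safe set F̂^{k−1} = {x | ∀ i, μ_i^{k−1}(x) − √β σ_i^{k−1}(x) > 0} is empty, and otherwise x^k ∈ F̂^{k−1}. If for each i and each k the bound |f_i(x) − μ_i^{k−1}(x)| ≤ √β σ_i^{k−1}(x) holds for all x, then x^k ∈ F for every k, i.e., the algorithm never violates any safety constraint. -/
import Mathlib


theorem stmt9 {X : Type*} (m : ℕ) (f : Fin m → X → ℝ)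
    (μ σ : ℕ → Fin m → X → ℝ) (β : ℝ) (hβ : 0 ≤ β)
    (hσ : ∀ k i x, 0 ≤ σ k i x)
    (F : Set X) (hF : F = {x | ∀ i, f i x ≥ 0}) (x₀ : X) (hx₀ : x₀ ∈ F)
    (Fhat : ℕ → Set X)
    (hFhat : ∀ k, Fhat k = {x | ∀ i, μ k i x - Real.sqrt β * σ k i x > 0})
    (xk : ℕ → X)
    (halg : ∀ k, (Fhat k = ∅ → xk (k+1) = x₀) ∧ (Fhat k ≠ ∅ → xk (k+1) ∈ Fhat k))
    (hconf : ∀ k i x, |f i x - μ k i x| ≤ Real.sqrt β * σ k i x) :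
    ∀ k, xk (k+1) ∈ F := by
  intro k
  by_cases h : Fhat k = ∅
  · rw [(halg k).1 h]; exact hx₀
  · have hx := (halg k).2 h
    rw [hFhat k] at hx
    rw [hF]
    intro i
    have h1 := hx i
    have h2 := (abs_le.mp (hconf k i (xk (k+1)))).1
    linarith
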